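/- Let V be a vertex ring and suppose a, b ∈ V satisfy a(n)b = δ_{n,-1} 𝟙 for all n ∈ ℤ (i.e., Y(a, z)b = 𝟙). Then also b(n)a = δ_{n,-1} 𝟙 for all n, and both a and b lie in the center C(V). -/

import Mathlib

noncomputable section

/-- Binomial coefficient `C(m, n)` for integer `m` and natural `n`:
`C(m,n) = m(m-1)⋯(m-n+1)/n!`. -/
def ibin (m : ℤ) (n : ℕ) : ℤ :=
  if 0 ≤ m then ((m.toNat.choose n : ℕ) : ℤ)
  else (-1) ^ n * ((((n : ℤ) - m - 1).toNat.choose n : ℕ) : ℤ)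

/-- Binomial coefficient `C(m, n)` for integers `m, n`, zero when `n < 0`. -/
def ibinZ (m n : ℤ) : ℤ := if 0 ≤ n then ibin m n.toNat else 0

/-- A vertex ring structure on an additive abelian group `V`: biadditive
products `mul n u v = u(n)v` for all `n : ℤ`, a vacuum element `one = 𝟙`,
satisfying truncation, the vacuum axioms, and the Jacobi identity. -/
structure VertexRing (V : Type*) [AddCommGroup V] where
  mul : ℤ → V → V → V
  one : V
  add_left : ∀ (n : ℤ) (u u' v : V), mul n (u + u') v = mul n u v + mul n u' v
  add_right : ∀ (n : ℤ) (u v v' : V), mul n u (v + v') = mul n u v + mul n u v'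
  trunc : ∀ u v : V, ∃ n₀ : ℤ, 0 ≤ n₀ ∧ ∀ n : ℤ, n₀ ≤ n → mul n u v = 0
  vac_create : ∀ u : V, mul (-1) u one = u
  vac_ann : ∀ (u : V) (n : ℤ), 0 ≤ n → mul n u one = 0
  jacobi : ∀ (r s t : ℤ) (u v w : V),
      (∑ᶠ i : ℕ, ibin r i • mul (r + s - (i : ℤ)) (mul (t + (i : ℤ)) u v) w) =
      (∑ᶠ i : ℕ, ((-1) ^ i * ibin t i) •
        (mul (r + t - (i : ℤ)) u (mul (s + (i : ℤ)) v w)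
          - (((-1 : ℤˣ) ^ t : ℤˣ) : ℤ) • mul (s + t - (i : ℤ)) v (mul (r + (i : ℤ)) u w)))

/-- The canonical Hasse–Schmidt derivation of a vertex ring: `D m u = u(-m-1)𝟙`. -/
def VertexRing.D {V : Type*} [AddCommGroup V] (R : VertexRing V) (m : ℕ) (u : V) : V :=
  R.mul (-(m : ℤ) - 1) u R.one

/-- The center of a vertex ring: states whose vertex operator is the constant
`u(-1)`, i.e. `u(n) = 0` for all `n ≠ -1`. -/
def VertexRing.center {V : Type*} [AddCommGroup V] (R : VertexRing V) : Set V :=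
  {u | ∀ n : ℤ, n ≠ -1 → ∀ v : V, R.mul n u v = 0}

/-!
If `Y(a,z)b = 𝟙`, skew-symmetry together with `D_m 𝟙 = 0` gives `Y(b,z)a = 𝟙` at once.
The Jacobi identity for the pair `(a, b)` with `t = -1 - j` collapses, because `a(n)b` is
concentrated in `n = -1`, to relations
`∑ᵢ C(i+j, i) a(r-1-j-i) b(s+i) w = C(r, j) δ_{r+s, j-1} w`
whenever `r` is beyond the truncation order of `a` on `w`. A downward induction turns these into
`a(m) b(p) = 0` for `m + p ≠ -2`, and further into `D_k a = 0` for `k ≥ 1`, so that `a(n) = 0`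
for `n ≤ -2` and `a(-1) b(-1) = id`. Then for `n ≠ -1`,
`a(n) w = a(n) b(-1) (a(-1) w) = 0`, and symmetrically for `b`.
-/

lemma ibin_zero_right (m : ℤ) : ibin m 0 = 1 := by
  unfold ibin; split <;> simp

lemma ibin_zero_left (i : ℕ) : ibin 0 i = if i = 0 then 1 else 0 := by
  cases i <;> simp [ibin]

lemma ibin_neg_one_sub (j i : ℕ) : ibin (-1 - j) i = (-1) ^ i * ((i + j).choose i : ℤ) := by
  rw [ibin, if_neg (by omega)]
  congr 3
  omega

lemma ibin_neg_one (i : ℕ) : ibin (-1) i = (-1) ^ i := by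
  simpa using ibin_neg_one_sub 0 i

lemma sum_range_neg_one_pow_mul_choose_succ {m : ℕ} (hm : 1 ≤ m) :
    ∑ i ∈ Finset.range m, (-1 : ℤ) ^ i * (m.choose (i + 1) : ℤ) = 1 := by
  have h := Int.alternating_sum_range_choose (n := m)
  rw [if_neg (by omega), Finset.sum_range_succ'] at h
  simp only [pow_succ, mul_neg_one, neg_mul, Finset.sum_neg_distrib, pow_zero,
    Nat.choose_zero_right, Nat.cast_one, one_mul] at h
  linarith

lemma Int.units_smul_eq_zero_iff {V : Type*} [AddCommGroup V] (e : ℤˣ) (x : V) :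
    (e : ℤ) • x = 0 ↔ x = 0 := by
  rw [← Units.smul_def, smul_eq_zero_iff_eq]

namespace VertexRing

variable {V : Type*} [AddCommGroup V] (R : VertexRing V)

lemma mul_zero_right (n : ℤ) (u : V) : R.mul n u 0 = 0 := by
  simpa using R.add_right n u 0 0

lemma mul_zero_left (n : ℤ) (w : V) : R.mul n 0 w = 0 := by
  simpa using R.add_left n 0 0 w

lemma D_map_zero (m : ℕ) : R.D m (0 : V) = 0 := R.mul_zero_left _ _

lemma mul_one_eq_D {n : ℤ} {m : ℕ} (hn : n = -(m : ℤ) - 1) (u : V) :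
    R.mul n u R.one = R.D m u := by
  rw [hn, VertexRing.D]

theorem skew (t : ℤ) (u v : V) :
    ∑ᶠ i : ℕ, (-1 : ℤ) ^ i • R.D (i + 1) (R.mul (t + i) u v) =
      R.mul (t - 1) u v - (((-1 : ℤˣ) ^ t : ℤˣ) : ℤ) • R.mul (t - 1) v u := by
  convert R.jacobi (-1) (-1) t u v R.one using 1
  · exact finsum_congr fun i => by
      rw [ibin_neg_one, R.mul_one_eq_D (m := i + 1) (by push_cast; ring)]
  · rw [finsum_eq_single _ 0 fun i hi => by
      rw [R.vac_ann v _ (by omega), R.vac_ann u _ (by omega), R.mul_zero_right,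
        R.mul_zero_right, smul_zero, sub_zero, smul_zero]]
    simp only [Nat.cast_zero, sub_zero, add_zero, R.vac_create, pow_zero, ibin_zero_right,
      mul_one, one_smul, show -1 + t = t - 1 by ring]

theorem D_one {m : ℕ} (hm : 1 ≤ m) : R.D m R.one = 0 := by
  induction m using Nat.strong_induction_on with
  | _ m ih =>
    have S := R.skew (-(m : ℤ)) R.one R.one
    rw [finsum_eq_single _ (m - 1) fun i hi => by
      rcases le_or_gt m i with hmi | himi
      · rw [R.vac_ann _ _ (by omega), R.D_map_zero, smul_zero]
      · rw [R.mul_one_eq_D (m := m - 1 - i) (by omega), ih _ (by omega) (by omega),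
          R.D_map_zero, smul_zero]] at S
    have hsign : (-1 : ℤ) ^ (m - 1) = -(-1) ^ m := by
      obtain ⟨k, rfl⟩ := Nat.exists_eq_add_of_le' hm
      simp [pow_succ]
    rw [show -(m : ℤ) + (m - 1 : ℕ) = -1 by omega, R.vac_create, Nat.sub_add_cancel hm,
      R.mul_one_eq_D (m := m) (by ring), hsign] at S
    simp only [zpow_neg, Int.units_inv_eq_self, zpow_natCast, Units.val_pow_eq_pow_val,
      Units.val_neg, Units.val_one, neg_smul] at S
    have := eq_sub_iff_add_eq.mp S
    rwa [neg_add_cancel, eq_comm] at this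

theorem D_D (p q : ℕ) (w : V) : R.D p (R.D q w) = ((p + q).choose p : ℤ) • R.D (p + q) w := by
  convert R.jacobi 0 (-1 - p) (-1 - q) w R.one R.one using 1
  · rw [finsum_eq_single _ 0 fun i hi => by rw [ibin_zero_left, if_neg hi, zero_smul],
      ibin_zero_left, if_pos rfl, one_smul, R.mul_one_eq_D (m := p) (by push_cast; ring),
      R.mul_one_eq_D (m := q) (by push_cast; ring)]
  · rw [finsum_eq_single _ p fun i hi => by
      rw [R.vac_ann w _ (by omega), R.mul_zero_right, smul_zero, sub_zero]
      rcases lt_or_gt_of_ne hi with hip | hpi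
      · rw [R.mul_one_eq_D (m := p - i) (by omega), R.D_one (by omega), R.mul_zero_right,
          smul_zero]
      · rw [R.vac_ann _ _ (by omega), R.mul_zero_right, smul_zero]]
    rw [R.vac_ann w _ (by omega), R.mul_zero_right, smul_zero, sub_zero, ibin_neg_one_sub,
      ← mul_assoc, ← mul_pow, show (-1 : ℤ) * -1 = 1 by norm_num, one_pow, one_mul,
      show -1 - (p : ℤ) + p = -1 by ring, R.vac_create,
      R.mul_one_eq_D (m := p + q) (by push_cast; ring)]

/-- The exponentials `e^{zD}` and `e^{-zD}` are mutually inverse. -/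
lemma sum_D_mul_one_of_le {n : ℤ} (hn : n ≤ -2) (w : V) :
    ∑ᶠ i : ℕ, (-1 : ℤ) ^ i • R.D (i + 1) (R.mul (n + 1 + i) w R.one) =
      R.D (-1 - n).toNat w := by
  set m := (-1 - n).toNat
  rw [finsum_eq_finsetSum_of_support_subset _ (s := Finset.range m) <|
    Function.support_subset_iff'.mpr fun i hi => by
      rw [Finset.coe_range, Set.mem_Iio, not_lt] at hi
      rw [R.vac_ann _ _ (by omega), R.D_map_zero, smul_zero]]
  calc ∑ i ∈ Finset.range m, (-1 : ℤ) ^ i • R.D (i + 1) (R.mul (n + 1 + i) w R.one)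
      = ∑ i ∈ Finset.range m, ((-1 : ℤ) ^ i * (m.choose (i + 1) : ℤ)) • R.D m w := by
        refine Finset.sum_congr rfl fun i hi => ?_
        have him := Finset.mem_range.mp hi
        rw [R.mul_one_eq_D (m := m - 1 - i) (by omega), R.D_D,
          show i + 1 + (m - 1 - i) = m by omega, smul_smul]
    _ = R.D m w := by
        rw [← Finset.sum_smul, sum_range_neg_one_pow_mul_choose_succ (by omega), one_smul]

theorem vac_mul (n : ℤ) (w : V) : R.mul n R.one w = if n = -1 then w else 0 := by
  have S := R.skew (n + 1) w R.one
  rw [add_sub_cancel_right] at S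
  rcases le_or_gt n (-2) with hn | hn
  · rw [R.sum_D_mul_one_of_le hn, R.mul_one_eq_D (m := (-1 - n).toNat) (by omega), eq_comm,
      sub_eq_self, Int.units_smul_eq_zero_iff] at S
    rw [S, if_neg (by omega)]
  · rw [finsum_eq_single _ 0 fun i _ => by rw [R.vac_ann _ _ (by omega), R.D_map_zero,
      smul_zero], R.vac_ann _ _ (by omega), R.D_map_zero, smul_zero] at S
    split_ifs with h1
    · subst h1
      simpa [R.vac_create] using (sub_eq_zero.mp S.symm).symm
    · rw [R.vac_ann _ _ (by omega), zero_sub, zero_eq_neg, Int.units_smul_eq_zero_iff] at S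
      exact S

theorem D_mul_neg_one (j : ℕ) (u w : V) : R.mul (-1) (R.D j u) w = R.mul (-1 - j) u w := by
  have J := R.jacobi 0 (-1) (-1 - j) u R.one w
  rw [finsum_eq_single _ 0 fun i hi => by rw [ibin_zero_left, if_neg hi, zero_smul]] at J
  rw [finsum_eq_single _ 0 fun i hi => by
    rw [R.vac_mul, if_neg (by omega), R.vac_mul _ (R.mul _ u w), if_neg (by omega),
      R.mul_zero_right, smul_zero, sub_zero, smul_zero]] at J
  rw [R.vac_mul _ (R.mul _ u w), if_neg (by omega)] at J
  simpa [ibin_zero_left, ibin_zero_right, R.vac_mul, R.mul_zero_right,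
    R.mul_one_eq_D (m := j) (show -1 - (j : ℤ) = -j - 1 by ring)] using J

theorem mul_mul_comm_of_mul_eq_zero {u v : V} (h : ∀ i : ℤ, 0 ≤ i → R.mul i u v = 0)
    (r s : ℤ) (w : V) : R.mul r u (R.mul s v w) = R.mul s v (R.mul r u w) := by
  have J := R.jacobi r s 0 u v w
  rw [finsum_congr fun i => by rw [h _ (by omega), R.mul_zero_left, smul_zero], finsum_zero,
    finsum_eq_single _ 0 fun i hi => by rw [ibin_zero_left, if_neg hi, mul_zero, zero_smul]]
    at J
  simp only [ibin_zero_left, if_pos, pow_zero, one_mul, one_smul] at J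
  simpa using (sub_eq_zero.mp J.symm)

theorem mul_eq_zero_of_D_eq_zero {u : V} (hD : ∀ k : ℕ, 1 ≤ k → R.D k u = 0) {n : ℤ}
    (hn : n ≤ -2) (w : V) : R.mul n u w = 0 := by
  rw [show n = -1 - ((-1 - n).toNat : ℕ) by omega, ← R.D_mul_neg_one, hD _ (by omega),
    R.mul_zero_left]

/-- `u` and `v` satisfy `Y(u, z)v = 𝟙`. -/
def IsUnitPair (u v : V) : Prop := ∀ n : ℤ, R.mul n u v = if n = -1 then R.one else 0

variable {R}

namespace IsUnitPair

variable {u v : V}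

theorem symm (huv : R.IsUnitPair u v) : R.IsUnitPair v u := by
  intro n
  have S := R.skew (n + 1) u v
  rw [finsum_eq_zero_of_forall_eq_zero fun i => by
    rw [huv]; split_ifs <;> simp [R.D_one, R.D_map_zero], add_sub_cancel_right, huv] at S
  split_ifs at S ⊢ with hn
  · subst hn
    simpa using (sub_eq_zero.mp S.symm).symm
  · rwa [zero_sub, zero_eq_neg, Int.units_smul_eq_zero_iff] at S

theorem sum_choose_mul_mul (huv : R.IsUnitPair u v) (j : ℕ) (r s : ℤ) {w : V}
    (hr : ∀ i : ℕ, R.mul (r + i) u w = 0) :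
    ∑ᶠ i : ℕ, ((i + j).choose i : ℤ) • R.mul (r - 1 - j - i) u (R.mul (s + i) v w) =
      if r + s = j - 1 then ibin r j • w else 0 := by
  have J := R.jacobi r s (-1 - j) u v w
  rw [finsum_eq_single _ j fun i hi => by
    rw [huv, if_neg (by omega), R.mul_zero_left, smul_zero]] at J
  rw [show -1 - (j : ℤ) + j = -1 by ring, huv, if_pos rfl, R.vac_mul] at J
  rw [finsum_congr fun i => by
    rw [hr, R.mul_zero_right, smul_zero, sub_zero, ibin_neg_one_sub, ← mul_assoc, ← mul_pow,
      show (-1 : ℤ) * -1 = 1 by norm_num, one_pow, one_mul,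
      show r + (-1 - j) - i = r - 1 - j - i by ring]] at J
  rw [← J, smul_ite, smul_zero]
  exact if_congr (by omega) rfl rfl

theorem mul_mul_eq_zero (huv : R.IsUnitPair u v) {m p : ℤ} (hmp : m + p ≠ -2) (w : V) :
    R.mul m u (R.mul p v w) = 0 := by
  obtain ⟨Nu, -, hNu⟩ := R.trunc u w
  obtain ⟨Nv, -, hNv⟩ := R.trunc v w
  suffices key : ∀ k : ℕ, ∀ q : ℤ, Nv ≤ q + k → R.mul (m + p - q) u (R.mul q v w) = 0 by
    simpa using key (Nv - p).toNat p (by omega)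
  intro k
  induction k with
  | zero => intro q hq; rw [hNv q (by omega), R.mul_zero_right]
  | succ k ih =>
    intro q hq
    -- `j` is chosen so that `r = m + p + 1 + j - q` lies beyond the truncation order of `u` on `w`.
    set j := (Nu - (m + p) - 1 + q).toNat
    have G := huv.sum_choose_mul_mul j (m + p + 1 + j - q) q fun i => hNu _ (by omega)
    rw [if_neg (by omega), finsum_eq_single _ 0 fun i hi => by
      rw [show m + p + 1 + j - q - 1 - j - i = m + p - (q + i) by ring,
        ih _ (by omega), smul_zero]] at G
    simpa [show m + p + 1 + j - q - 1 - j = m + p - q by ring] using G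

theorem D_eq_zero (huv : R.IsUnitPair u v) {k : ℕ} (hk : 1 ≤ k) : R.D k u = 0 := by
  obtain ⟨N, -, hN⟩ := R.trunc u (R.D k u)
  have G := huv.sum_choose_mul_mul 0 N (-1 - N) fun i => hN _ (by omega)
  rw [if_pos (by push_cast; ring), ibin_zero_right, one_smul] at G
  rw [← G]
  refine finsum_eq_zero_of_forall_eq_zero fun i => ?_
  have hv : R.mul (-1 - N + i) v (R.D k u) = 0 := by
    have hcomm := R.mul_mul_comm_of_mul_eq_zero
      (fun i hi => by rw [huv, if_neg (by omega)]) (-k - 1) (-1 - N + i) R.one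
    rw [VertexRing.D, ← hcomm]
    by_cases hi : -1 - N + i = (k : ℤ) - 1
    · rw [R.vac_ann _ _ (by omega), R.mul_zero_right]
    · exact huv.mul_mul_eq_zero (by omega) _
  rw [hv, R.mul_zero_right, smul_zero]

theorem mul_eq_zero_of_le (huv : R.IsUnitPair u v) {n : ℤ} (hn : n ≤ -2) (w : V) :
    R.mul n u w = 0 :=
  R.mul_eq_zero_of_D_eq_zero (fun _ => huv.D_eq_zero) hn w

theorem mul_neg_one_mul_neg_one (huv : R.IsUnitPair u v) (w : V) :
    R.mul (-1) u (R.mul (-1) v w) = w := by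
  obtain ⟨N, hN0, hN⟩ := R.trunc u w
  have G := huv.sum_choose_mul_mul 0 N (-1 - N) fun i => hN _ (by omega)
  rw [if_pos (by push_cast; ring), ibin_zero_right, one_smul] at G
  rw [finsum_eq_single _ N.toNat fun i hi => by
    rcases lt_or_gt_of_ne hi with hiN | hNi
    · rw [huv.symm.mul_eq_zero_of_le (by omega), R.mul_zero_right, smul_zero]
    · rw [huv.mul_eq_zero_of_le (by omega), smul_zero]] at G
  rwa [show N - 1 - ((0 : ℕ) : ℤ) - N.toNat = -1 by omega, show -1 - N + N.toNat = -1 by omega,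
    add_zero, Nat.choose_self, Nat.cast_one, one_smul] at G

theorem mem_center (huv : R.IsUnitPair u v) : u ∈ R.center := fun n hn w => by
  rw [← huv.symm.mul_neg_one_mul_neg_one w]
  exact huv.mul_mul_eq_zero (by omega) _

end IsUnitPair

end VertexRing

/-- If `Y(a,z)b = 𝟙`, i.e. `a(n)b = δ_{n,-1}𝟙`, then also `b(n)a = δ_{n,-1}𝟙`
and both `a` and `b` lie in the center. -/
theorem unit_symmetric_and_central {V : Type*} [AddCommGroup V] (R : VertexRing V) (a b : V)
    (h : ∀ n : ℤ, R.mul n a b = if n = -1 then R.one else 0) :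
    (∀ n : ℤ, R.mul n b a = if n = -1 then R.one else 0) ∧
    a ∈ R.center ∧ b ∈ R.center :=
  have hab : R.IsUnitPair a b := h
  ⟨hab.symm, hab.mem_center, hab.symm.mem_center⟩
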